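/- arXiv:2206.06042 — 2 statements merged into one kernel-verified Lean document; each statement's English description precedes it below -/
import Mathlib

section
/- Let (K, σ) be a σ-field and let S = {a_1, …, a_n} ⊆ K be a P-independent set of n distinct elements with minimal polynomial P_S(T) ∈ K[T;σ]. Then det(V^σ(a_1,…,a_n)) ≠ 0 and for every a ∈ K one has P_S(a) = det(V^σ(a_1,…,a_n,a)) / det(V^σ(a_1,…,a_n)). -/
open Polynomial

variable {K : Type*} [Field K]

/-- `skewN σ i a = σ^{i-1}(a)⋯σ(a)·a`, with `skewN σ 0 a = 1`. -/
def skewN (σ : K →+* K) : ℕ → K → K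
  | 0, _ => 1
  | i + 1, a => σ (skewN σ i a) * a

/-- Right evaluation of a skew polynomial `P = Σ aᵢ Tⁱ` at `a`: `P(a) = Σ aᵢ Nᵢ(a)`. -/
noncomputable def skewEval (σ : K →+* K) (P : Polynomial K) (a : K) : K :=
  ∑ i ∈ P.support, P.coeff i * skewN σ i a

/-- Multiplication in the skew polynomial ring `K[T;σ]` (with `T·a = σ(a)·T`),
using `Polynomial K` as the carrier of coefficient sequences. -/
noncomputable def skewMul (σ : K →+* K) (P Q : Polynomial K) : Polynomial K :=
  ∑ i ∈ P.support, ∑ j ∈ Q.support,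
    Polynomial.C (P.coeff i * (⇑σ)^[i] (Q.coeff j)) * Polynomial.X ^ (i + j)

/-- `P` vanishes (right-evaluates to `0`) on the set `S`. -/
def SkewVanishes (σ : K →+* K) (P : Polynomial K) (S : Set K) : Prop :=
  ∀ x ∈ S, skewEval σ P x = 0

/-- `P` is the minimal skew polynomial of `S`: monic, vanishing on `S`, and every skew
polynomial vanishing on `S` is a left multiple of `P` in `K[T;σ]`. -/
def IsMinSkewPoly (σ : K →+* K) (P : Polynomial K) (S : Set K) : Prop :=
  P.Monic ∧ SkewVanishes σ P S ∧
    ∀ Q : Polynomial K, SkewVanishes σ Q S → ∃ R : Polynomial K, Q = skewMul σ R P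

/-- `S` is P-independent: no `a ∈ S` is a right root of the minimal skew polynomial of
`S \ {a}`. -/
def PIndependent (σ : K →+* K) (S : Set K) : Prop :=
  ∀ a ∈ S, ∀ P : Polynomial K, IsMinSkewPoly σ P (S \ {a}) → skewEval σ P a ≠ 0

/-- The σ-Vandermonde matrix: entry in row `i`, column `j` is `N_i(a_j)`. -/
noncomputable def skewVandermonde (σ : K →+* K) {n : ℕ} (a : Fin n → K) :
    Matrix (Fin n) (Fin n) K :=
  Matrix.of fun i j => skewN σ (i : ℕ) (a j)

/-! Expanding `det V^σ(a₁,…,aₙ,y)` along its last column gives a skew polynomial `Q` of degree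
`≤ n` with `Q(y) = det V^σ(a₁,…,aₙ,y)`, whose coefficient of `Tⁿ` is `det V^σ(a₁,…,aₙ)` and which
vanishes on `S` (two equal columns). A kernel vector `v` of `V^σ(a₁,…,aₙ)` satisfies
`Σⱼ P(aⱼ) vⱼ = 0` for every `P` of degree `< n`. Take for `P` the minimal polynomial of
`S \ {aⱼ}`, which exists and has degree `≤ n - 1` by right division in `K[T;σ]`: only the `j`-th
term survives, so P-independence forces `vⱼ = 0`. Invertibility of `V^σ(a₁,…,aₙ)` in turn rules
out a nonzero vanishing polynomial of degree `< n`, so `deg P_S = n`, and since `Q` is a left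
multiple of `P_S` it is `det V^σ(a₁,…,aₙ) · P_S`. -/

section SkewArith

variable {σ : K →+* K}

theorem skewN_add (i j : ℕ) (a : K) :
    skewN σ (i + j) a = σ^[i] (skewN σ j a) * skewN σ i a := by
  induction i with
  | zero => simp [skewN]
  | succ i ih =>
    rw [Nat.add_right_comm, skewN, ih, map_mul, skewN, Function.iterate_succ_apply', mul_assoc]

noncomputable def skewEvalₗ (σ : K →+* K) (x : K) : K[X] →ₗ[K] K :=
  lsum fun i => LinearMap.mulRight K (skewN σ i x)

theorem skewEvalₗ_apply (x : K) (P : K[X]) : skewEvalₗ σ x P = skewEval σ P x := rfl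

theorem skewEval_add (P Q : K[X]) (x : K) :
    skewEval σ (P + Q) x = skewEval σ P x + skewEval σ Q x :=
  map_add (skewEvalₗ σ x) P Q

theorem skewEval_sub (P Q : K[X]) (x : K) :
    skewEval σ (P - Q) x = skewEval σ P x - skewEval σ Q x :=
  map_sub (skewEvalₗ σ x) P Q

theorem skewEval_finset_sum {ι : Type*} (s : Finset ι) (f : ι → K[X]) (x : K) :
    skewEval σ (∑ i ∈ s, f i) x = ∑ i ∈ s, skewEval σ (f i) x :=
  map_sum (skewEvalₗ σ x) f s

theorem skewEval_C_mul (c : K) (P : K[X]) (x : K) :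
    skewEval σ (C c * P) x = c * skewEval σ P x := by
  rw [← smul_eq_C_mul, ← skewEvalₗ_apply, map_smul, smul_eq_mul, skewEvalₗ_apply]

theorem skewEval_monomial (i : ℕ) (c x : K) :
    skewEval σ (monomial i c) x = c * skewN σ i x :=
  sum_monomial_index c (fun i c => c * skewN σ i x) (zero_mul _)

theorem skewEval_eq_sum_range {P : K[X]} {m : ℕ} (h : P.natDegree < m) (x : K) :
    skewEval σ P x = ∑ i ∈ Finset.range m, P.coeff i * skewN σ i x :=
  sum_over_range' P (f := fun i c => c * skewN σ i x) (fun _ => zero_mul _) m h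

theorem skewMul_eq (P Q : K[X]) :
    skewMul σ P Q = P.sum fun i c => C c * Q.map (σ ^ i) * X ^ i := by
  rw [skewMul, Polynomial.sum_def]
  refine Finset.sum_congr rfl fun i _ => ?_
  conv_rhs => rw [Q.as_sum_support]
  rw [Polynomial.map_sum, Finset.mul_sum, Finset.sum_mul]
  refine Finset.sum_congr rfl fun j _ => ?_
  rw [C_mul_X_pow_eq_monomial, map_monomial, C_mul_monomial, X_pow_eq_monomial,
    monomial_mul_monomial, mul_one, add_comm j i, RingHom.coe_pow]

theorem skewMul_zero_left (Q : K[X]) : skewMul σ 0 Q = 0 := by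
  rw [skewMul_eq, sum_zero_index]

theorem skewMul_add_left (P₁ P₂ Q : K[X]) :
    skewMul σ (P₁ + P₂) Q = skewMul σ P₁ Q + skewMul σ P₂ Q := by
  simp only [skewMul_eq]
  exact sum_add_index _ _ _ (fun _ => by simp) fun _ _ _ => by rw [C_add, add_mul, add_mul]

theorem skewMul_monomial_left (i : ℕ) (c : K) (Q : K[X]) :
    skewMul σ (monomial i c) Q = C c * Q.map (σ ^ i) * X ^ i := by
  rw [skewMul_eq]
  exact sum_monomial_index c _ (by simp)

theorem skewMul_C_left (c : K) (Q : K[X]) : skewMul σ (C c) Q = C c * Q := by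
  simpa [RingHom.one_def] using skewMul_monomial_left (σ := σ) 0 c Q

theorem coeff_skewMul_natDegree_add (P Q : K[X]) :
    (skewMul σ P Q).coeff (P.natDegree + Q.natDegree) =
      P.leadingCoeff * σ^[P.natDegree] Q.leadingCoeff := by
  rw [skewMul_eq, Polynomial.sum_def, finsetSum_coeff]
  have hlower : ∀ i ∈ P.support, i ≠ P.natDegree →
      (C (P.coeff i) * Q.map (σ ^ i) * X ^ i).coeff (P.natDegree + Q.natDegree) = 0 := by
    intro i hi hne
    have hlt : i < P.natDegree := (le_natDegree_of_mem_supp i hi).lt_of_ne hne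
    rw [coeff_mul_X_pow', if_pos (by omega), coeff_C_mul, coeff_map,
      coeff_eq_zero_of_natDegree_lt (p := Q) (by omega), map_zero, mul_zero]
  rw [Finset.sum_eq_single P.natDegree hlower (fun h => by simp [notMem_support_iff.mp h]),
    coeff_mul_X_pow', if_pos (Nat.le_add_right _ _), Nat.add_sub_cancel_left, coeff_C_mul,
    coeff_map, RingHom.coe_pow]
  rfl

theorem natDegree_skewMul_le (P Q : K[X]) :
    (skewMul σ P Q).natDegree ≤ P.natDegree + Q.natDegree := by
  rw [skewMul_eq, Polynomial.sum_def]
  refine natDegree_sum_le_of_forall_le _ _ fun i hi => ?_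
  have hi : i ≤ P.natDegree := le_natDegree_of_mem_supp i hi
  calc (C (P.coeff i) * Q.map (σ ^ i) * X ^ i).natDegree
      ≤ (C (P.coeff i) * Q.map (σ ^ i)).natDegree + i :=
        natDegree_mul_le.trans (by rw [natDegree_X_pow])
    _ ≤ Q.natDegree + i := by
        gcongr
        exact (natDegree_C_mul_le _ _).trans (natDegree_map_le)
    _ ≤ P.natDegree + Q.natDegree := by omega

section Monic

variable {P : K[X]} (hP : P.Monic)
include hP

theorem coeff_skewMul_of_monic (R : K[X]) :
    (skewMul σ R P).coeff (R.natDegree + P.natDegree) = R.leadingCoeff := by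
  rw [coeff_skewMul_natDegree_add, hP.leadingCoeff, iterate_map_one, mul_one]

theorem natDegree_skewMul_of_monic {R : K[X]} (hR : R ≠ 0) :
    (skewMul σ R P).natDegree = R.natDegree + P.natDegree :=
  (natDegree_skewMul_le R P).antisymm <| le_natDegree_of_ne_zero <| by
    rw [coeff_skewMul_of_monic hP]
    exact leadingCoeff_ne_zero.mpr hR

theorem leadingCoeff_skewMul_of_monic (R : K[X]) :
    (skewMul σ R P).leadingCoeff = R.leadingCoeff := by
  rcases eq_or_ne R 0 with rfl | hR
  · rw [skewMul_zero_left]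
  · rw [leadingCoeff, natDegree_skewMul_of_monic hP hR, coeff_skewMul_of_monic hP]

end Monic

end SkewArith

section SkewEvalMul

variable {σ : K →+* K}

theorem skewEval_skewMul_monomial (i : ℕ) (c : K) (Q : K[X]) (x : K) :
    skewEval σ (skewMul σ (monomial i c) Q) x = c * σ^[i] (skewEval σ Q x) * skewN σ i x := by
  have hexpand : C c * Q.map (σ ^ i) * X ^ i =
      ∑ j ∈ Q.support, monomial (i + j) (c * σ^[i] (Q.coeff j)) := by
    conv_lhs => rw [Q.as_sum_support]
    rw [Polynomial.map_sum, Finset.mul_sum, Finset.sum_mul]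
    refine Finset.sum_congr rfl fun j _ => ?_
    rw [map_monomial, C_mul_monomial, X_pow_eq_monomial, monomial_mul_monomial, mul_one,
      add_comm j i, RingHom.coe_pow]
  rw [skewMul_monomial_left, hexpand, skewEval_finset_sum, skewEval, ← RingHom.coe_pow, map_sum,
    Finset.mul_sum, Finset.sum_mul]
  refine Finset.sum_congr rfl fun j _ => ?_
  rw [skewEval_monomial, skewN_add, RingHom.coe_pow, iterate_map_mul]
  ring

theorem skewEval_skewMul (P Q : K[X]) (x : K) :
    skewEval σ (skewMul σ P Q) x = P.sum fun i c => c * σ^[i] (skewEval σ Q x) * skewN σ i x := by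
  induction P using Polynomial.induction_on' with
  | add p q hp hq =>
    rw [skewMul_add_left, skewEval_add, hp, hq,
      sum_add_index p q _ (fun _ => by simp) fun _ _ _ => by rw [add_mul, add_mul]]
  | monomial i c =>
    rw [skewEval_skewMul_monomial, sum_monomial_index c _ (by simp)]

theorem skewEval_skewMul_of_skewEval_eq_zero (P : K[X]) {Q : K[X]} {x : K}
    (h : skewEval σ Q x = 0) : skewEval σ (skewMul σ P Q) x = 0 := by
  rw [skewEval_skewMul, h, Polynomial.sum_def]
  exact Finset.sum_eq_zero fun i _ => by simp

theorem skewEval_skewMul_X_sub_C (b : K) (Q : K[X]) (x : K) :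
    skewEval σ (skewMul σ (X - C b) Q) x = σ (skewEval σ Q x) * x - b * skewEval σ Q x := by
  rw [sub_eq_add_neg, ← monomial_one_one_eq_X, ← map_neg, ← monomial_zero_left,
    skewMul_add_left, skewEval_add, skewEval_skewMul_monomial, skewEval_skewMul_monomial]
  simp [skewN]
  ring

end SkewEvalMul

section Division

variable {σ : K →+* K} {P : K[X]}

theorem degree_sub_skewMul_lt (hP : P.Monic) {Q : K[X]} (h : P.degree ≤ Q.degree) :
    (Q - skewMul σ (monomial (Q.natDegree - P.natDegree) Q.leadingCoeff) P).degree < Q.degree := by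
  have hQ : Q ≠ 0 := by
    rintro rfl
    exact hP.ne_zero (degree_eq_bot.mp (le_bot_iff.mp h))
  have hlc : Q.leadingCoeff ≠ 0 := leadingCoeff_ne_zero.mpr hQ
  have hle : P.natDegree ≤ Q.natDegree := natDegree_le_natDegree h
  set T := skewMul σ (monomial (Q.natDegree - P.natDegree) Q.leadingCoeff) P
  have hTlc : T.leadingCoeff = Q.leadingCoeff := by
    rw [leadingCoeff_skewMul_of_monic hP, leadingCoeff_monomial]
  have hTdeg : T.natDegree = Q.natDegree := by
    rw [natDegree_skewMul_of_monic hP ((monomial_eq_zero_iff _ _).not.mpr hlc),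
      natDegree_monomial_eq _ hlc]
    omega
  have hT : T ≠ 0 := fun h0 => hlc (by rw [← hTlc, h0, leadingCoeff_zero])
  exact degree_sub_lt_left (by rw [degree_eq_natDegree hQ, degree_eq_natDegree hT, hTdeg]) hQ
    hTlc.symm

theorem exists_eq_skewMul_add_of_monic (hP : P.Monic) (Q : K[X]) :
    ∃ R S : K[X], Q = skewMul σ R P + S ∧ S.degree < P.degree := by
  by_cases hQ : Q.degree < P.degree
  · exact ⟨0, Q, by rw [skewMul_zero_left, zero_add], hQ⟩
  obtain ⟨R, S, hRS, hS⟩ := exists_eq_skewMul_add_of_monic hP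
    (Q - skewMul σ (monomial (Q.natDegree - P.natDegree) Q.leadingCoeff) P)
  refine ⟨monomial (Q.natDegree - P.natDegree) Q.leadingCoeff + R, S, ?_, hS⟩
  rw [skewMul_add_left, add_assoc, ← hRS, add_sub_cancel]
termination_by Q.degree
decreasing_by exact degree_sub_skewMul_lt hP (not_lt.mp hQ)

end Division

section MinSkewPoly

variable {σ : K →+* K}

theorem exists_monic_skewVanishes (s : Finset K) :
    ∃ N : K[X], N.Monic ∧ N.natDegree = s.card ∧ SkewVanishes σ N s := by
  classical
  induction s using Finset.induction_on with
  | empty => exact ⟨1, monic_one, natDegree_one, by simp [SkewVanishes]⟩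
  | insert y s hy ih =>
    obtain ⟨N, hNm, hNd, hNv⟩ := ih
    set c := skewEval σ N y
    -- `b` is chosen so that `σ(N(y))·y = b·N(y)`; for `c = 0` the junk value `0⁻¹ = 0` still works
    set b := σ c * y * c⁻¹
    have hmonic : (X - C b).Monic := monic_X_sub_C b
    refine ⟨skewMul σ (X - C b) N, ?_, ?_, ?_⟩
    · rw [Monic, leadingCoeff_skewMul_of_monic hNm, hmonic.leadingCoeff]
    · rw [natDegree_skewMul_of_monic hNm hmonic.ne_zero, natDegree_X_sub_C, hNd,
        Finset.card_insert_of_notMem hy, add_comm]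
    · rw [SkewVanishes, Finset.coe_insert, Set.forall_mem_insert]
      refine ⟨?_, fun x hx => skewEval_skewMul_of_skewEval_eq_zero _ (hNv x hx)⟩
      rw [skewEval_skewMul_X_sub_C, sub_eq_zero]
      change σ c * y = b * c
      rcases eq_or_ne c 0 with hc | hc
      · simp [b, hc]
      · exact (inv_mul_cancel_right₀ hc _).symm

theorem exists_isMinSkewPoly_of_monic {N : K[X]} (S : Set K) (hN : N.Monic)
    (hNS : SkewVanishes σ N S) :
    ∃ P : K[X], IsMinSkewPoly σ P S ∧ P.natDegree ≤ N.natDegree := by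
  classical
  have hex : ∃ d, ∃ P : K[X], P.Monic ∧ SkewVanishes σ P S ∧ P.natDegree = d :=
    ⟨_, N, hN, hNS, rfl⟩
  obtain ⟨P, hPm, hPS, hPd⟩ := Nat.find_spec hex
  refine ⟨P, ⟨hPm, hPS, fun Q hQ => ?_⟩, hPd ▸ Nat.find_le ⟨N, hN, hNS, rfl⟩⟩
  obtain ⟨R, T, hQRT, hT⟩ := exists_eq_skewMul_add_of_monic (σ := σ) hPm Q
  refine ⟨R, ?_⟩
  by_contra hne
  have hT0 : T ≠ 0 := by
    rintro rfl
    exact hne (by rw [hQRT, add_zero])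
  have hTS : SkewVanishes σ (C T.leadingCoeff⁻¹ * T) S := fun x hx => by
    rw [skewEval_C_mul, eq_sub_of_add_eq' hQRT.symm, skewEval_sub, hQ x hx,
      skewEval_skewMul_of_skewEval_eq_zero R (hPS x hx), sub_zero, mul_zero]
  have hlt : (C T.leadingCoeff⁻¹ * T).natDegree < Nat.find hex := by
    rw [natDegree_C_mul (inv_ne_zero (leadingCoeff_ne_zero.mpr hT0)), ← hPd]
    exact natDegree_lt_natDegree hT0 hT
  exact Nat.find_min hex hlt ⟨_, monic_C_mul_of_mul_leadingCoeff_eq_one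
    (inv_mul_cancel₀ (leadingCoeff_ne_zero.mpr hT0)), hTS, rfl⟩

theorem exists_isMinSkewPoly_natDegree_le_card (s : Finset K) :
    ∃ P : K[X], IsMinSkewPoly σ P s ∧ P.natDegree ≤ s.card := by
  obtain ⟨N, hNm, hNd, hNs⟩ := exists_monic_skewVanishes (σ := σ) s
  exact hNd ▸ exists_isMinSkewPoly_of_monic _ hNm hNs

variable {P Q : K[X]} {S : Set K}

theorem IsMinSkewPoly.natDegree_le (hP : IsMinSkewPoly σ P S) (hQ : SkewVanishes σ Q S)
    (hQ0 : Q ≠ 0) : P.natDegree ≤ Q.natDegree := by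
  obtain ⟨R, rfl⟩ := hP.2.2 Q hQ
  have hR : R ≠ 0 := by
    rintro rfl
    exact hQ0 (skewMul_zero_left P)
  rw [natDegree_skewMul_of_monic hP.1 hR]
  omega

theorem IsMinSkewPoly.eq_C_mul (hP : IsMinSkewPoly σ P S) (hQ : SkewVanishes σ Q S)
    (hdeg : Q.natDegree ≤ P.natDegree) : Q = C (Q.coeff P.natDegree) * P := by
  obtain ⟨R, rfl⟩ := hP.2.2 Q hQ
  rcases eq_or_ne R 0 with rfl | hR
  · simp [skewMul_zero_left]
  rw [natDegree_skewMul_of_monic hP.1 hR] at hdeg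
  rw [eq_C_of_natDegree_eq_zero (by omega : R.natDegree = 0), skewMul_C_left, coeff_C_mul,
    hP.1.coeff_natDegree, mul_one]

end MinSkewPoly

section Vandermonde

variable {σ : K →+* K} {n : ℕ}

theorem vecMul_skewVandermonde {P : K[X]} (hP : P.natDegree < n) (a : Fin n → K) :
    Matrix.vecMul (fun i : Fin n => P.coeff i) (skewVandermonde σ a) =
      fun j => skewEval σ P (a j) := by
  funext j
  rw [skewEval_eq_sum_range hP, ← Fin.sum_univ_eq_sum_range]
  rfl

theorem eq_zero_of_skewVanishes_of_natDegree_lt {a : Fin n → K}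
    (hdet : (skewVandermonde σ a).det ≠ 0) {P : K[X]} (hP : SkewVanishes σ P (Set.range a))
    (hdeg : P.natDegree < n) : P = 0 := by
  have hcoeff : (fun i : Fin n => P.coeff i) = 0 := by
    by_contra hne
    refine hdet (Matrix.exists_vecMul_eq_zero_iff.mp ⟨_, hne, ?_⟩)
    rw [vecMul_skewVandermonde hdeg]
    exact funext fun j => hP _ ⟨j, rfl⟩
  ext i
  rw [coeff_zero]
  rcases lt_or_ge i n with hi | hi
  · exact congrFun hcoeff ⟨i, hi⟩
  · exact coeff_eq_zero_of_natDegree_lt (hdeg.trans_le hi)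

theorem det_skewVandermonde_ne_zero {a : Fin n → K} (hinj : Function.Injective a)
    (hind : PIndependent σ (Set.range a)) : (skewVandermonde σ a).det ≠ 0 := by
  classical
  intro hdet
  obtain ⟨v, hv, hVv⟩ := Matrix.exists_mulVec_eq_zero_iff.mpr hdet
  obtain ⟨j₀, hj₀⟩ := Function.ne_iff.mp hv
  set s := (Finset.univ.image a).erase (a j₀)
  have hs : (s : Set K) = Set.range a \ {a j₀} := by simp [s]
  obtain ⟨P, hP, hPs⟩ := exists_isMinSkewPoly_natDegree_le_card (σ := σ) s
  have hdeg : P.natDegree < n := by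
    have himage : (Finset.univ.image a).card ≤ n :=
      (Finset.card_image_le).trans_eq (Finset.card_fin n)
    have herase : s.card < (Finset.univ.image a).card :=
      Finset.card_erase_lt_of_mem (Finset.mem_image_of_mem a (Finset.mem_univ j₀))
    omega
  have hsum : ∑ j, skewEval σ P (a j) * v j = 0 := by
    have := Matrix.dotProduct_mulVec (fun i : Fin n => P.coeff i) (skewVandermonde σ a) v
    rwa [hVv, dotProduct_zero, vecMul_skewVandermonde hdeg, eq_comm] at this
  have hroot : ∀ j ≠ j₀, skewEval σ P (a j) = 0 := fun j hj =>
    hP.2.1 _ (hs ▸ ⟨⟨j, rfl⟩, fun h => hj (hinj h)⟩)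
  rw [Finset.sum_eq_single j₀ (fun j _ hj => by rw [hroot j hj, zero_mul]) (by simp)] at hsum
  exact mul_ne_zero (hind _ ⟨j₀, rfl⟩ P (hs ▸ hP)) hj₀ hsum

/-- Cofactor expansion of `det V^σ(a, y)` along its last column, the one containing `y`. -/
noncomputable def skewVandermondeDetPoly (σ : K →+* K) (a : Fin n → K) : K[X] :=
  ∑ i : Fin (n + 1), monomial i
    ((-1) ^ ((i : ℕ) + n) * (Matrix.of fun r s : Fin n => skewN σ (i.succAbove r) (a s)).det)

theorem skewEval_skewVandermondeDetPoly (a : Fin n → K) (y : K) :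
    skewEval σ (skewVandermondeDetPoly σ a) y = (skewVandermonde σ (Fin.snoc a y)).det := by
  rw [skewVandermondeDetPoly, skewEval_finset_sum, Matrix.det_succ_column _ (Fin.last n)]
  refine Finset.sum_congr rfl fun i _ => ?_
  rw [skewEval_monomial, Fin.val_last]
  simp only [skewVandermonde, Matrix.submatrix, Matrix.of_apply, Fin.snoc_last,
    Fin.succAbove_last, Fin.snoc_castSucc]
  ring

theorem coeff_skewVandermondeDetPoly (a : Fin n → K) :
    (skewVandermondeDetPoly σ a).coeff n = (skewVandermonde σ a).det := by
  rw [skewVandermondeDetPoly, finsetSum_coeff, Finset.sum_eq_single (Fin.last n)]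
  · rw [Fin.val_last, coeff_monomial_same, ← two_mul, pow_mul, neg_one_sq, one_pow, one_mul]
    congr
    ext r s
    simp
  · intro i _ hi
    rw [coeff_monomial, if_neg]
    exact fun h => hi (Fin.ext (h.trans (Fin.val_last n).symm))
  · simp

theorem natDegree_skewVandermondeDetPoly_le (a : Fin n → K) :
    (skewVandermondeDetPoly σ a).natDegree ≤ n :=
  natDegree_sum_le_of_forall_le _ _ fun i _ => (natDegree_monomial_le _).trans (Fin.is_le i)

theorem skewVanishes_skewVandermondeDetPoly (a : Fin n → K) :
    SkewVanishes σ (skewVandermondeDetPoly σ a) (Set.range a) := by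
  rintro _ ⟨j, rfl⟩
  rw [skewEval_skewVandermondeDetPoly]
  refine Matrix.det_zero_of_column_eq (Fin.castSucc_lt_last j).ne fun i => ?_
  simp [skewVandermonde]

end Vandermonde

/-- For a P-independent set `S = {a₁,…,aₙ}` of distinct elements with minimal skew polynomial
`P_S`, the σ-Vandermonde determinant is nonzero and
`P_S(a) = det V^σ(a₁,…,aₙ,a) / det V^σ(a₁,…,aₙ)` for every `a ∈ K`. -/
theorem stmt_3 {K : Type*} [Field K] (σ : K →+* K) {n : ℕ} (a : Fin n → K)
    (hinj : Function.Injective a) (hind : PIndependent σ (Set.range a))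
    (PS : Polynomial K) (hPS : IsMinSkewPoly σ PS (Set.range a)) :
    (skewVandermonde σ a).det ≠ 0 ∧
    ∀ x : K, skewEval σ PS x =
      (skewVandermonde σ (Fin.snoc a x)).det / (skewVandermonde σ a).det := by
  have hdet : (skewVandermonde σ a).det ≠ 0 := det_skewVandermonde_ne_zero hinj hind
  have hQS := skewVanishes_skewVandermondeDetPoly (σ := σ) a
  have hQ0 : skewVandermondeDetPoly σ a ≠ 0 := fun h =>
    hdet (by rw [← coeff_skewVandermondeDetPoly, h, coeff_zero])
  have hdeg : PS.natDegree = n := by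
    refine ((hPS.natDegree_le hQS hQ0).trans (natDegree_skewVandermondeDetPoly_le a)).antisymm ?_
    by_contra! h
    exact hPS.1.ne_zero (eq_zero_of_skewVanishes_of_natDegree_lt hdet hPS.2.1 h)
  have hQ := hPS.eq_C_mul hQS (hdeg.symm ▸ natDegree_skewVandermondeDetPoly_le a)
  rw [hdeg, coeff_skewVandermondeDetPoly] at hQ
  refine ⟨hdet, fun x => ?_⟩
  rw [← skewEval_skewVandermondeDetPoly, hQ, skewEval_C_mul, mul_div_cancel_left₀ _ hdet]
end

section
/- Let (L, σ) be a σ-extension of a σ-field (K, σ) and let b ∈ L. There exists a nonzero x ∈ L such that σ(x)·b·x^{−1} is σ-algebraic over K if and only if there exists a nonzero finite-dimensional K-vector subspace W of L such that b·σ(W) ⊆ W. -/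
/-!
For `x ≠ 0` one has `Nᵢ(σ(x)·b·x⁻¹) = φⁱ(x)·x⁻¹`, where `φ(w) = b·σ(w)` is a `σ`-semilinear
endomorphism of the `K`-vector space `L`. Since right multiplication by `x⁻¹` is `K`-linear and
injective, `σ(x)·b·x⁻¹` is `σ`-algebraic over `K` exactly when the `φ`-orbit of `x` is
`K`-linearly dependent. For any semilinear endomorphism this happens iff `x` lies in a
finite-dimensional invariant subspace: the span of `x, φ(x), …, φⁿ⁻¹(x)` is invariant as soon as
`φⁿ(x)` lies in it, and an infinite independent family cannot live in a finite-dimensional space.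
-/

open Polynomial

variable {K : Type*} [Field K]

/-- In a σ-extension `(L, σL)` of the σ-subfield `K`, the element `a` is σ-algebraic
over `K`: it is a right root of some nonzero skew polynomial with coefficients in `K`. -/
def IsSkewAlgebraic {L : Type*} [Field L] (σL : L →+* L) (K : Subfield L) (a : L) : Prop :=
  ∃ P : Polynomial L, P ≠ 0 ∧ (∀ i, P.coeff i ∈ K) ∧ skewEval σL P a = 0

open Submodule Set

section
variable {K V : Type*} [Field K] [AddCommGroup V] [Module K V]

theorem linearIndependent_of_forall_notMem_span_Iio {v : ℕ → V}
    (h : ∀ n, v n ∉ span K (v '' Iio n)) : LinearIndependent K v := by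
  have hIio : ∀ n, LinearIndepOn K v (Iio n) := by
    intro n
    induction n with
    | zero => simp
    | succ n ih =>
      rw [Iio_add_one_eq_Iic, ← Iio_insert, linearIndepOn_insert self_notMem_Iio]
      exact ⟨ih, h n⟩
  rw [← linearIndepOn_univ_iff, ← iUnion_Iio]
  exact linearIndepOn_iUnion_of_directed (Monotone.directed_le fun _ _ => Iio_subset_Iio) hIio

variable {τ : K →+* K} (f : V →ₛₗ[τ] V)

theorem span_iterate_Iio_le_comap {x : V} {n : ℕ}
    (hn : f^[n] x ∈ span K ((f^[·] x) '' Iio n)) :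
    span K ((f^[·] x) '' Iio n) ≤ (span K ((f^[·] x) '' Iio n)).comap f := by
  rw [span_le]
  rintro _ ⟨i, hi, rfl⟩
  rw [SetLike.mem_coe, mem_comap, ← Function.iterate_succ_apply' f]
  rcases (Nat.succ_le_of_lt hi).lt_or_eq with hlt | rfl
  · exact subset_span ⟨i + 1, hlt, rfl⟩
  · exact hn

theorem iterate_mem_of_le_comap {W : Submodule K V} (hW : W ≤ W.comap f) {x : V} (hx : x ∈ W)
    (i : ℕ) : f^[i] x ∈ W := by
  induction i with
  | zero => exact hx
  | succ i ih => rw [Function.iterate_succ_apply']; exact hW ih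

theorem exists_finiteDimensional_le_comap_iff_not_linearIndependent_iterate (x : V) :
    (∃ W : Submodule K V, x ∈ W ∧ FiniteDimensional K W ∧ W ≤ W.comap f) ↔
      ¬ LinearIndependent K (f^[·] x) := by
  constructor
  · rintro ⟨W, hxW, hW, hinv⟩ hli
    let u : ℕ → W := fun i => ⟨f^[i] x, iterate_mem_of_le_comap f hinv hxW i⟩
    exact Module.Finite.not_linearIndependent_of_infinite u (.of_comp W.subtype hli)
  · intro hdep
    obtain ⟨n, hn⟩ : ∃ n, f^[n] x ∈ span K ((f^[·] x) '' Iio n) := by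
      by_contra! h
      exact hdep (linearIndependent_of_forall_notMem_span_Iio h)
    refine ⟨_, ?_, FiniteDimensional.span_of_finite K ((finite_Iio n).image _),
      span_iterate_Iio_le_comap f hn⟩
    rcases n with _ | n
    · exact hn
    · exact subset_span ⟨0, Nat.succ_pos n, rfl⟩
end

section
variable {L : Type*} [Field L]

theorem Subfield.not_linearIndependent_iff_exists_polynomial (K : Subfield L) (u : ℕ → L) :
    ¬ LinearIndependent K u ↔
      ∃ P : L[X], P ≠ 0 ∧ (∀ i, P.coeff i ∈ K) ∧ ∑ i ∈ P.support, P.coeff i * u i = 0 := by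
  classical
  constructor
  · intro hdep
    obtain ⟨s, g, hg, i, hi, hgi⟩ := not_linearIndependent_iff.1 hdep
    let P : L[X] := ∑ j ∈ s, C (g j : L) * X ^ j
    have hP : ∀ j, P.coeff j = if j ∈ s then (g j : L) else 0 := by
      intro j
      simp [P, finsetSum_coeff]
    refine ⟨P, fun h0 => hgi ?_, fun j => ?_, ?_⟩
    · simpa [hP, hi] using congrArg (coeff · i) h0
    · rw [hP]; split_ifs
      exacts [(g j).2, K.zero_mem]
    · have hsupp : P.support ⊆ s := fun j hj => by
        by_contra hjs
        exact mem_support_iff.1 hj (by simp [hP, hjs])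
      rw [Finset.sum_subset hsupp fun j _ hj => by rw [notMem_support_iff.1 hj, zero_mul], ← hg]
      exact Finset.sum_congr rfl fun j hj => by simp [hP, hj, Subfield.smul_def]
  · rintro ⟨P, hP0, hPK, hP⟩ hli
    have h := linearIndependent_iff'.1 hli P.support (fun i => ⟨P.coeff i, hPK i⟩)
      (by simpa [Subfield.smul_def] using hP) _ (natDegree_mem_support_of_nonzero hP0)
    exact hP0 (leadingCoeff_eq_zero.1 (congrArg Subtype.val h))

theorem isSkewAlgebraic_iff_not_linearIndependent (σ : L →+* L) (K : Subfield L) (a : L) :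
    IsSkewAlgebraic σ K a ↔ ¬ LinearIndependent K (skewN σ · a) :=
  (K.not_linearIndependent_iff_exists_polynomial _).symm
end

section
variable {L : Type*} [Field L] (σ : L →+* L)

theorem skewN_conj {x : L} (hx : x ≠ 0) (b : L) (i : ℕ) :
    skewN σ i (σ x * b * x⁻¹) = σ^[i] x * skewN σ i b * x⁻¹ := by
  induction i with
  | zero => simp [skewN, hx]
  | succ i ih =>
    have hσx : σ x ≠ 0 := (map_ne_zero σ).2 hx
    rw [skewN, skewN, ih, Function.iterate_succ_apply', map_mul, map_mul, map_inv₀]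
    field_simp

theorem iterate_mul_map_eq_mul_skewN (b x : L) (i : ℕ) :
    (fun w => b * σ w)^[i] x = σ^[i] x * skewN σ i b := by
  induction i with
  | zero => simp [skewN]
  | succ i ih =>
    rw [Function.iterate_succ_apply', ih, Function.iterate_succ_apply', skewN, map_mul]
    ring

theorem isSkewAlgebraic_conj_iff (K : Subfield L) {x : L} (hx : x ≠ 0) (b : L) :
    IsSkewAlgebraic σ K (σ x * b * x⁻¹) ↔
      ¬ LinearIndependent K (fun i => (fun w => b * σ w)^[i] x) := by
  have hscale : (skewN σ · (σ x * b * x⁻¹)) =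
      LinearMap.mulRight K x⁻¹ ∘ fun i => (fun w => b * σ w)^[i] x := by
    ext i
    simp [skewN_conj σ hx, iterate_mul_map_eq_mul_skewN]
  have hinj : LinearMap.ker (LinearMap.mulRight K x⁻¹) = ⊥ :=
    LinearMap.ker_eq_bot.2 (mul_left_injective₀ (inv_ne_zero hx))
  rw [isSkewAlgebraic_iff_not_linearIndependent, hscale, LinearMap.linearIndependent_iff _ hinj]

def skewShift (K : Subfield L) (hK : ∀ x ∈ K, σ x ∈ K) (b : L) : L →ₛₗ[σ.restrict K K hK] L where
  toFun w := b * σ w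
  map_add' v w := by rw [map_add, mul_add]
  map_smul' c w := by
    simp only [Subfield.smul_def, map_mul, RingHom.coe_restrict_apply, smul_eq_mul]
    ring
end

/-- `b` has a σ-conjugate `σ(x)·b·x⁻¹` that is σ-algebraic over `K` iff some nonzero
finite-dimensional `K`-subspace `W` of `L` satisfies `b·σ(W) ⊆ W`. -/
theorem stmt_6 {L : Type*} [Field L] (σL : L →+* L) (K : Subfield L)
    (hK : ∀ x ∈ K, σL x ∈ K) (b : L) :
    (∃ x : L, x ≠ 0 ∧ IsSkewAlgebraic σL K (σL x * b * x⁻¹)) ↔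
    (∃ W : Submodule K L, W ≠ ⊥ ∧ FiniteDimensional K W ∧ ∀ w ∈ W, b * σL w ∈ W) := by
  have key (x : L) (hx : x ≠ 0) : IsSkewAlgebraic σL K (σL x * b * x⁻¹) ↔
      ∃ W : Submodule K L, x ∈ W ∧ FiniteDimensional K W ∧ W ≤ W.comap (skewShift σL K hK b) :=
    (isSkewAlgebraic_conj_iff σL K hx b).trans
      (exists_finiteDimensional_le_comap_iff_not_linearIndependent_iterate
        (skewShift σL K hK b) x).symm
  constructor
  · rintro ⟨x, hx, halg⟩
    obtain ⟨W, hxW, hW, hinv⟩ := (key x hx).1 halg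
    exact ⟨W, (Submodule.ne_bot_iff W).2 ⟨x, hxW, hx⟩, hW, hinv⟩
  · rintro ⟨W, hW, hfin, hinv⟩
    obtain ⟨x, hxW, hx⟩ := W.exists_mem_ne_zero_of_ne_bot hW
    exact ⟨x, hx, (key x hx).2 ⟨W, hxW, hfin, hinv⟩⟩
end
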